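/- arXiv:2412.07805 — 3 statements merged into one kernel-verified Lean document; each statement's English description precedes it below -/
import Mathlib

section
/- Let K be a finite simplicial complex with an acyclic partial matching μ : M → M. Then for every q ≥ 0, H_q(K) is isomorphic to H_q(Crit_*(K, μ)), where Crit_*(K, μ) is the chain complex spanned in each degree q by {φ_q(γ) : γ ∈ R_q(μ)} with boundary operator the restriction of ∂. -/
set_option maxSynthPendingDepth 2

/-! Simplicial ℤ/2 chains and homology machinery. -/

/-- Chains with `ℤ/2` coefficients, formal sums of finite subsets of `V`. -/
abbrev Ch (V : Type*) := Finset V →₀ ZMod 2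

/-- The simplicial boundary operator: a simplex with at least two vertices is sent
to the sum of its codimension-1 faces; vertices are sent to `0`. -/
noncomputable def bdry (V : Type*) [DecidableEq V] : Ch V →ₗ[ZMod 2] Ch V :=
  Finsupp.linearCombination (ZMod 2) fun σ : Finset V =>
    if σ.card ≤ 1 then 0 else ∑ v ∈ σ, Finsupp.single (σ.erase v) (1 : ZMod 2)

/-- A simplicial complex: a collection of nonempty finite subsets of `V`
closed under taking nonempty subsets. -/
def IsComplex {V : Type*} (K : Set (Finset V)) : Prop :=
  ∀ σ ∈ K, σ.Nonempty ∧ ∀ τ ⊆ σ, τ.Nonempty → τ ∈ K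

/-- The space of chains supported on simplices of `K` with `k` vertices
(i.e. the simplicial chain group of degree `k - 1`). -/
noncomputable def chainCard {V : Type*} [DecidableEq V] (K : Set (Finset V)) (k : ℕ) :
    Submodule (ZMod 2) (Ch V) :=
  Submodule.span (ZMod 2) {f | ∃ σ ∈ K, σ.card = k ∧ f = Finsupp.single σ 1}

theorem chainCard_mono {V : Type*} [DecidableEq V] {K₁ K₂ : Set (Finset V)}
    (h : K₁ ⊆ K₂) (k : ℕ) : chainCard K₁ k ≤ chainCard K₂ k := by
  apply Submodule.span_mono
  rintro f ⟨σ, hσ, hc, rfl⟩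
  exact ⟨σ, h hσ, hc, rfl⟩

/-- Cycles (in cardinality grading `k`, i.e. degree `k-1`) of a chain subcomplex `W`. -/
noncomputable def cyclesOf {V : Type*} [DecidableEq V] (W : ℕ → Submodule (ZMod 2) (Ch V)) (k : ℕ) :
    Submodule (ZMod 2) (Ch V) :=
  W k ⊓ LinearMap.ker (bdry V)

/-- Boundaries (in cardinality grading `k`, i.e. degree `k-1`) of a chain subcomplex `W`. -/
noncomputable def bdriesOf {V : Type*} [DecidableEq V] (W : ℕ → Submodule (ZMod 2) (Ch V)) (k : ℕ) :
    Submodule (ZMod 2) (Ch V) :=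
  Submodule.map (bdry V) (W (k + 1))

/-- Homology of the chain complex `W` in cardinality grading `k` (degree `k - 1`):
cycles modulo boundaries. -/
abbrev homolOf {V : Type*} [DecidableEq V] (W : ℕ → Submodule (ZMod 2) (Ch V)) (k : ℕ) :=
  ↥(cyclesOf W k) ⧸ (bdriesOf W k).comap (cyclesOf W k).subtype

/-- The map on homology induced by a degreewise inclusion of chain complexes. -/
noncomputable def homolMap {V : Type*} [DecidableEq V]
    (W W' : ℕ → Submodule (ZMod 2) (Ch V)) (h : ∀ k, W k ≤ W' k) (k : ℕ) :
    homolOf W k →ₗ[ZMod 2] homolOf W' k :=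
  Submodule.mapQ _ _ (Submodule.inclusion (inf_le_inf (h k) le_rfl))
    (by
      intro x hx
      simp only [Submodule.mem_comap, Submodule.subtype_apply, Submodule.coe_inclusion]
        at hx ⊢
      exact Submodule.map_mono (h (k + 1)) hx)

/-! Discrete Morse theory: partial matchings, acyclicity, the closure map. -/

/-- `Covers σ τ`: `σ` covers `τ` in the face poset, i.e. `τ ⊆ σ` in codimension one. -/
def Covers {V : Type*} (σ τ : Finset V) : Prop :=
  τ ⊆ σ ∧ σ.card = τ.card + 1

/-- A partial matching: an involution `μ` on a set `M` of simplices matching each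
simplex with a simplex that covers it or that it covers. -/
structure PartialMatching (V : Type*) where
  M : Set (Finset V)
  μ : Finset V → Finset V
  mem_M : ∀ σ ∈ M, μ σ ∈ M
  invol : ∀ σ ∈ M, μ (μ σ) = σ
  matched : ∀ σ ∈ M, Covers (μ σ) σ ∨ Covers σ (μ σ)

/-- Acyclicity of a partial matching: there is no cyclic sequence
`σ₁ ≻ μ(σ₁) ≺ σ₂ ≻ μ(σ₂) ≺ ⋯ ≺ σ_l ≻ μ(σ_l) ≺ σ₁` with `l ≥ 2` and the `σᵢ` distinct. -/
def PartialMatching.Acyclic {V : Type*} (m : PartialMatching V) : Prop :=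
  ¬ ∃ (l : ℕ) (f : ℕ → Finset V), 2 ≤ l ∧
      (∀ i < l, ∀ j < l, f i = f j → i = j) ∧
      (∀ i < l, f i ∈ m.M ∧ Covers (f i) (m.μ (f i))) ∧
      (∀ i < l, Covers (f ((i + 1) % l)) (m.μ (f i)))

/-- `M^↑`: matched simplices lying above their partner. -/
def Mup {V : Type*} (m : PartialMatching V) : Set (Finset V) :=
  {σ | σ ∈ m.M ∧ Covers σ (m.μ σ)}

/-- `M_q^↑` in cardinality grading: elements of `M^↑` with `k` vertices (degree `k-1`). -/
def MupCard {V : Type*} (m : PartialMatching V) (k : ℕ) : Set (Finset V) :=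
  {σ | σ ∈ Mup m ∧ σ.card = k}

/-- `R_q(μ)` in cardinality grading: the unmatched (critical) simplices of `K`
with `k` vertices (degree `k-1`). -/
def Rcard {V : Type*} (K : Set (Finset V)) (m : PartialMatching V) (k : ℕ) :
    Set (Finset V) :=
  {σ | σ ∈ K ∧ σ.card = k ∧ σ ∉ m.M}

/-- `(α, β)` is an edge of the graph `G(μ)`: `μ β` is defined, `β` lies above its
partner, and `α` covers `μ β` (with `β ≠ α`). -/
def IsEdge {V : Type*} (m : PartialMatching V) (α β : Finset V) : Prop :=
  β ≠ α ∧ β ∈ m.M ∧ Covers β (m.μ β) ∧ Covers α (m.μ β)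

open scoped Classical in
/-- `φ` is the closure map of the matching `m` on `K`: it satisfies the defining
recursion `φ α = α + ∑ φ β` over the edges `(α, β)` emanating from `α` in `G(μ)`. -/
def IsClosure {V : Type*} [Fintype V] [DecidableEq V] (K : Set (Finset V))
    (m : PartialMatching V) (φ : Finset V → Ch V) : Prop :=
  ∀ α ∈ K, φ α = Finsupp.single α 1 + ∑ β : Finset V, if IsEdge m α β then φ β else 0

/-- The degree-`(k-1)` chain group of the Morse (critical) complex of `C`:
the span of the closures of the unmatched simplices of `C` with `k` vertices. -/
noncomputable def critWOn {V : Type*} [DecidableEq V] (C : Set (Finset V))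
    (m : PartialMatching V) (φ : Finset V → Ch V) (k : ℕ) :
    Submodule (ZMod 2) (Ch V) :=
  Submodule.span (ZMod 2) {f | ∃ γ, γ ∈ C ∧ γ.card = k ∧ γ ∉ m.M ∧ f = φ γ}

theorem critWOn_mono {V : Type*} [DecidableEq V] {C₁ C₂ : Set (Finset V)}
    (h : C₁ ⊆ C₂) (m : PartialMatching V) (φ : Finset V → Ch V) (k : ℕ) :
    critWOn C₁ m φ k ≤ critWOn C₂ m φ k := by
  apply Submodule.span_mono
  rintro f ⟨γ, hγ, hc, hm, rfl⟩
  exact ⟨γ, h hγ, hc, hm, rfl⟩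

/-- The degree-`(k-1)` chain group of the complex `Match`, spanned by `M_{k-1}^↑`
together with the boundaries of the elements of `M_k^↑`. -/
noncomputable def matchW {V : Type*} [DecidableEq V] (m : PartialMatching V) (k : ℕ) :
    Submodule (ZMod 2) (Ch V) :=
  Submodule.span (ZMod 2)
    ({f | ∃ σ ∈ MupCard m k, f = Finsupp.single σ 1} ∪
      {f | ∃ β ∈ MupCard m (k + 1), f = bdry V (Finsupp.single β 1)})

/-- The set `B_q^R ∪ B_q^↑ ∪ B_q^↓` (in cardinality grading `k = q + 1`). -/
noncomputable def morseBasis {V : Type*} [DecidableEq V] (K : Set (Finset V))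
    (m : PartialMatching V) (φ : Finset V → Ch V) (k : ℕ) : Set (Ch V) :=
  {f | ∃ γ ∈ Rcard K m k, f = φ γ} ∪
    ({f | ∃ σ ∈ MupCard m k, f = Finsupp.single σ 1} ∪
      {f | ∃ β ∈ MupCard m (k + 1), f = bdry V (Finsupp.single β 1)})

/-!
The chain complex of `K` is the direct sum of two subcomplexes: `Crit`, spanned by the closures
`φ γ` of the critical simplices, and `Match`, spanned in each degree by the simplices of `M^↑`
and the boundaries of the simplices of `M^↑` one dimension up. Since `μ` is acyclic, the edges
of `G(μ)` form a well-founded relation, and `φ α` is `α` plus simplices of `M^↑` reachable from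
`α`. Ordering `M^↑` along `G(μ)` makes `∂` triangular on chains supported on `M^↑`: for a
simplex `β₀` of the support with no edge of the support into it, `(∂ c)(μ β₀) = c β₀`. Hence
such a chain vanishes as soon as its boundary vanishes on the down-matched simplices. Together
with `(∂ φ α)(μ β) = [β = α]`, this shows that `Crit` is a subcomplex, that `Crit ∩ Match = 0`,
and that `Match` is acyclic, so the inclusion `Crit → C(K)` is an isomorphism on homology.
-/

open Finsupp Relation

section Boundary

variable {V : Type*} [DecidableEq V]

instance (σ τ : Finset V) : Decidable (Covers σ τ) := inferInstanceAs (Decidable (_ ∧ _))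

theorem Covers.exists_erase {σ τ : Finset V} (h : Covers σ τ) : ∃ v ∈ σ, σ.erase v = τ := by
  obtain ⟨v, hv⟩ := Finset.card_eq_one.1
    (show (σ \ τ).card = 1 by rw [Finset.card_sdiff_of_subset h.1, h.2]; omega)
  obtain ⟨hvσ, hvτ⟩ := Finset.mem_sdiff.1 (hv ▸ Finset.mem_singleton_self v)
  refine ⟨v, hvσ, (Finset.eq_of_subset_of_card_le (fun w hw => ?_) ?_).symm⟩
  · exact Finset.mem_erase.2 ⟨fun hwv => hvτ (hwv ▸ hw), h.1 hw⟩
  · rw [Finset.card_erase_of_mem hvσ, h.2]; omega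

theorem covers_erase {σ : Finset V} {v : V} (hv : v ∈ σ) : Covers σ (σ.erase v) := by
  refine ⟨Finset.erase_subset v σ, ?_⟩
  rw [Finset.card_erase_of_mem hv]
  have := Finset.card_pos.2 ⟨v, hv⟩
  omega

theorem bdry_single (σ : Finset V) :
    bdry V (single σ 1) = if σ.card ≤ 1 then 0 else ∑ v ∈ σ, single (σ.erase v) 1 := by
  simp [bdry]

theorem bdry_single_apply {σ τ : Finset V} (hτ : τ.Nonempty) :
    bdry V (single σ 1) τ = if Covers σ τ then 1 else 0 := by
  rw [bdry_single]
  split_ifs with hσ hcov hcov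
  · have := Finset.card_pos.2 hτ; have := hcov.2; omega
  · rfl
  · obtain ⟨v₀, hv₀, rfl⟩ := hcov.exists_erase
    rw [finsetSum_apply, Finset.sum_eq_single v₀ (fun v hv hne => ?_) (absurd hv₀),
      single_eq_same]
    rw [single_eq_of_ne' fun h => hne ((Finset.erase_inj σ hv).1 h)]
  · rw [finsetSum_apply]
    exact Finset.sum_eq_zero fun v hv =>
      single_eq_of_ne' fun h : σ.erase v = τ => hcov (h ▸ covers_erase hv)

theorem bdry_apply (c : Ch V) {τ : Finset V} (hτ : τ.Nonempty) :
    bdry V c τ = ∑ σ ∈ c.support, if Covers σ τ then c σ else 0 := by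
  rw [bdry, linearCombination_apply, Finsupp.sum, finsetSum_apply]
  refine Finset.sum_congr rfl fun σ _ => ?_
  rw [Finsupp.smul_apply, ← bdry_single, bdry_single_apply hτ, smul_eq_mul]
  split_ifs <;> simp

theorem bdry_bdry_single (σ : Finset V) : bdry V (bdry V (single σ 1)) = 0 := by
  rw [bdry_single]
  split_ifs with hσ
  · exact map_zero _
  rw [map_sum]
  by_cases h2 : σ.card = 2
  · refine Finset.sum_eq_zero fun v hv => ?_
    rw [bdry_single, if_pos (by rw [Finset.card_erase_of_mem hv]; omega)]
  have hfaces : ∀ v ∈ σ, bdry V (single (σ.erase v) 1) =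
      ∑ w ∈ σ.erase v, single ((σ.erase v).erase w) (1 : ZMod 2) := fun v hv => by
    rw [bdry_single, if_neg (by rw [Finset.card_erase_of_mem hv]; omega)]
  rw [Finset.sum_congr rfl hfaces, Finset.sum_sigma']
  -- removing `v` then `w` gives the same face as removing `w` then `v`
  refine Finset.sum_involution (fun p _ => ⟨p.2, p.1⟩) (fun p _ => ?_) (fun p hp _ h => ?_)
    (fun p hp => ?_) (fun p _ => rfl)
  · rw [Finset.erase_right_comm]
    exact ZModModule.add_self _
  · exact Finset.ne_of_mem_erase (Finset.mem_sigma.1 hp).2 (congrArg Sigma.fst h)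
  · obtain ⟨hv, hw⟩ := Finset.mem_sigma.1 hp
    exact Finset.mem_sigma.2 ⟨Finset.mem_of_mem_erase hw,
      Finset.mem_erase.2 ⟨(Finset.ne_of_mem_erase hw).symm, hv⟩⟩

theorem bdry_bdry (c : Ch V) : bdry V (bdry V c) = 0 := by
  induction c using Finsupp.induction_linear with
  | zero => simp
  | add c d hc hd => simp [hc, hd]
  | single σ a =>
    rw [← smul_single_one, map_smul, map_smul, bdry_bdry_single, smul_zero]

theorem span_single_eq_supported {R α : Type*} [Semiring R] (S : Set α) :
    Submodule.span R {f : α →₀ R | ∃ a ∈ S, f = single a 1} = supported R R S := by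
  rw [supported_eq_span_single]
  congr 1
  ext f
  exact ⟨fun ⟨a, ha, h⟩ => ⟨a, ha, h.symm⟩, fun ⟨a, ha, h⟩ => ⟨a, ha, h.symm⟩⟩

theorem chainCard_eq_supported (K : Set (Finset V)) (k : ℕ) :
    chainCard K k = supported (ZMod 2) (ZMod 2) {σ | σ ∈ K ∧ σ.card = k} := by
  rw [chainCard, ← span_single_eq_supported]
  simp only [Set.mem_ofPred_eq, and_assoc]

theorem bdry_chainCard_le {K : Set (Finset V)} (hK : IsComplex K) (k : ℕ) :
    (chainCard K (k + 1)).map (bdry V) ≤ chainCard K k := by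
  rw [chainCard, Submodule.map_span_le]
  rintro _ ⟨σ, hσ, hc, rfl⟩
  rw [bdry_single]
  split_ifs with hσ1
  · exact zero_mem _
  refine Submodule.sum_mem _ fun v hv => Submodule.subset_span ⟨σ.erase v, ?_, ?_, rfl⟩
  · refine (hK σ hσ).2 _ (Finset.erase_subset v σ) ?_
    rw [← Finset.card_pos, Finset.card_erase_of_mem hv]; omega
  · rw [Finset.card_erase_of_mem hv, hc]; rfl

end Boundary

section Walks

variable {X : Type*} {r : X → X → Prop}

theorem Relation.TransGen.exists_walk {a b : X} (h : TransGen r a b) :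
    ∃ (n : ℕ) (w : ℕ → X), 1 ≤ n ∧ w 0 = a ∧ w n = b ∧ ∀ i < n, r (w i) (w (i + 1)) := by
  induction h with
  | @single c hac =>
    refine ⟨1, fun i => if i = 0 then a else c, le_rfl, rfl, rfl, fun i hi => ?_⟩
    obtain rfl : i = 0 := by omega
    exact hac
  | @tail b c _ hbc ih =>
    obtain ⟨n, w, hn, h0, hnb, hw⟩ := ih
    refine ⟨n + 1, fun i => if i ≤ n then w i else c, by omega, by simpa, by simp,
      fun i hi => ?_⟩
    rcases Nat.lt_or_ge i n with hin | hin
    · simpa [hin.le, Nat.succ_le_of_lt hin] using hw i hin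
    · obtain rfl : i = n := by omega
      simpa [hnb] using hbc

theorem exists_simple_cycle_of_closed_walk (n : ℕ) (w : ℕ → X) (hn : 1 ≤ n)
    (hclosed : w n = w 0) (hw : ∀ i < n, r (w i) (w (i + 1))) :
    ∃ (l : ℕ) (f : ℕ → X), 1 ≤ l ∧ (∀ i < l, ∀ j < l, f i = f j → i = j) ∧
      ∀ i < l, r (f i) (f ((i + 1) % l)) := by
  induction n using Nat.strong_induction_on generalizing w with
  | _ n ih =>
  by_cases hinj : ∀ i < n, ∀ j < n, w i = w j → i = j
  · refine ⟨n, w, hn, hinj, fun i hi => ?_⟩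
    rcases Nat.lt_or_ge (i + 1) n with h | h
    · rw [Nat.mod_eq_of_lt h]; exact hw i hi
    · obtain rfl : n = i + 1 := by omega
      rw [Nat.mod_self, ← hclosed]; exact hw i hi
  push Not at hinj
  obtain ⟨i, hi, j, hj, hij, hne⟩ := hinj
  wlog hlt : i < j generalizing i j
  · exact this j hj i hi hij.symm hne.symm (by omega)
  exact ih (j - i) (by omega) (fun t => w (i + t)) (by omega)
    (by simp [Nat.add_sub_cancel' hlt.le, hij])
    (fun t ht => by simpa [Nat.add_assoc] using hw (i + t) (by omega))

end Walks

section Matching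

variable {V : Type*} {m : PartialMatching V}

theorem PartialMatching.Acyclic.not_transGen_isEdge (hac : m.Acyclic) (α : Finset V) :
    ¬ TransGen (IsEdge m) α α := by
  intro h
  obtain ⟨n, w, hn, h0, hnα, hw⟩ := (transGen_swap.2 h).exists_walk
  obtain ⟨l, f, hl, hinj, hf⟩ :=
    exists_simple_cycle_of_closed_walk n w hn (hnα.trans h0.symm) hw
  rcases Nat.lt_or_ge l 2 with hl2 | hl2
  · obtain rfl : l = 1 := by omega
    exact (hf 0 one_pos).1 rfl
  · exact hac ⟨l, f, hl2, hinj, fun i hi => ⟨(hf i hi).2.1, (hf i hi).2.2.1⟩,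
      fun i hi => (hf i hi).2.2.2⟩

theorem PartialMatching.Acyclic.wellFounded_isEdge [Finite V] (hac : m.Acyclic) :
    WellFounded (IsEdge m) :=
  have : Std.Irrefl (TransGen (IsEdge m)) := ⟨hac.not_transGen_isEdge⟩
  Subrelation.wf TransGen.single (Finite.wellFounded_of_trans_of_irrefl _)

theorem PartialMatching.Acyclic.wellFounded_swap_isEdge [Finite V] (hac : m.Acyclic) :
    WellFounded (Function.swap (IsEdge m)) :=
  have : Std.Irrefl (TransGen (Function.swap (IsEdge m))) :=
    ⟨fun α h => hac.not_transGen_isEdge α (transGen_swap.1 h)⟩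
  Subrelation.wf TransGen.single (Finite.wellFounded_of_trans_of_irrefl _)

theorem IsEdge.card_eq {α β : Finset V} (h : IsEdge m α β) : β.card = α.card := by
  have := h.2.2.1.2; have := h.2.2.2.2; omega

theorem card_eq_of_transGen_isEdge {α β : Finset V} (h : TransGen (IsEdge m) α β) :
    β.card = α.card := by
  induction h with
  | single h => exact h.card_eq
  | tail _ h ih => exact h.card_eq.trans ih

theorem partner_notMem_Mup {β : Finset V} (hβ : β ∈ Mup m) : m.μ β ∉ Mup m := fun h => by
  have := hβ.2.2; have := h.2.2; rw [m.invol β hβ.1] at this; omega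

theorem partner_mem_Mup_of_notMem_Mup {τ : Finset V} (hτ : τ ∈ m.M) (hτup : τ ∉ Mup m) :
    m.μ τ ∈ Mup m ∧ m.μ (m.μ τ) = τ := by
  refine ⟨⟨m.mem_M τ hτ, ?_⟩, m.invol τ hτ⟩
  rw [m.invol τ hτ]
  exact (m.matched τ hτ).resolve_right fun h => hτup ⟨hτ, h⟩

theorem partner_nonempty {K : Set (Finset V)} (hK : IsComplex K) (hMK : m.M ⊆ K)
    {β : Finset V} (hβ : β ∈ Mup m) : (m.μ β).Nonempty :=
  (hK _ (hMK (m.mem_M β hβ.1))).1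

end Matching

section Closure

variable {V : Type*} [Fintype V] [DecidableEq V] {K : Set (Finset V)} {m : PartialMatching V}
  {φ : Finset V → Ch V}

theorem IsClosure.sub_single_mem_supported (hφ : IsClosure K m φ) (hac : m.Acyclic)
    (hMK : m.M ⊆ K) {α : Finset V} (hα : α ∈ K) :
    φ α - single α 1 ∈
      supported (ZMod 2) (ZMod 2) {δ | δ ∈ Mup m ∧ TransGen (IsEdge m) α δ} := by
  induction α using hac.wellFounded_swap_isEdge.induction with
  | _ α ih =>
  rw [hφ α hα, add_sub_cancel_left]
  refine Submodule.sum_mem _ fun β _ => ?_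
  split_ifs with hαβ
  · rw [← add_sub_cancel (single β 1) (φ β)]
    refine add_mem (single_mem_supported (ZMod 2) (1 : ZMod 2)
      ⟨⟨hαβ.2.1, hαβ.2.2.1⟩, .single hαβ⟩) ?_
    exact supported_mono (fun δ hδ => by exact ⟨hδ.1, .head hαβ hδ.2⟩)
      (ih β hαβ (hMK hαβ.2.1))
  · exact zero_mem _

theorem IsClosure.apply_self (hφ : IsClosure K m φ) (hac : m.Acyclic) (hMK : m.M ⊆ K)
    {α : Finset V} (hα : α ∈ K) : φ α α = 1 := by
  have h := (mem_supported' _ _).1 (hφ.sub_single_mem_supported hac hMK hα) α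
    fun hα' => hac.not_transGen_isEdge α hα'.2
  rwa [Finsupp.sub_apply, single_eq_same, sub_eq_zero] at h

theorem IsClosure.apply_of_notMem_Mup (hφ : IsClosure K m φ) (hac : m.Acyclic)
    (hMK : m.M ⊆ K) {α δ : Finset V} (hα : α ∈ K) (hδ : δ ∉ Mup m) (hδα : δ ≠ α) : φ α δ = 0 := by
  have h := (mem_supported' _ _).1 (hφ.sub_single_mem_supported hac hMK hα) δ fun h => hδ h.1
  rwa [Finsupp.sub_apply, single_eq_of_ne hδα, sub_zero] at h

theorem IsClosure.sub_single_mem_matchW (hφ : IsClosure K m φ) (hac : m.Acyclic)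
    (hMK : m.M ⊆ K) {α : Finset V} (hα : α ∈ K) : φ α - single α 1 ∈ matchW m α.card := by
  refine Submodule.span_mono Set.subset_union_left ?_
  rw [span_single_eq_supported]
  exact supported_mono (fun δ hδ => by exact ⟨hδ.1, card_eq_of_transGen_isEdge hδ.2⟩)
    (hφ.sub_single_mem_supported hac hMK hα)

theorem IsClosure.mem_chainCard (hφ : IsClosure K m φ) (hac : m.Acyclic) (hMK : m.M ⊆ K)
    {α : Finset V} (hα : α ∈ K) : φ α ∈ chainCard K α.card := by
  rw [← sub_add_cancel (φ α) (single α 1), chainCard_eq_supported]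
  refine add_mem ?_ (single_mem_supported (ZMod 2) (1 : ZMod 2) ⟨hα, rfl⟩)
  exact supported_mono (fun δ hδ => by exact ⟨hMK hδ.1.1, card_eq_of_transGen_isEdge hδ.2⟩)
    (hφ.sub_single_mem_supported hac hMK hα)

theorem IsClosure.bdry_apply_partner (hφ : IsClosure K m φ) (hK : IsComplex K)
    (hac : m.Acyclic) (hMK : m.M ⊆ K) {α β : Finset V} (hα : α ∈ K) (hβ : β ∈ Mup m) :
    bdry V (φ α) (m.μ β) = if β = α then 1 else 0 := by
  induction α using hac.wellFounded_swap_isEdge.induction with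
  | _ α ih =>
  classical
  have hterm : ∀ β', bdry V (if IsEdge m α β' then φ β' else 0) (m.μ β) =
      if β' = β then (if IsEdge m α β then 1 else 0) else 0 := by
    intro β'
    rcases eq_or_ne β' β with rfl | hβ'
    · by_cases hαβ' : IsEdge m α β'
      · rw [if_pos hαβ', ih β' hαβ' (hMK hαβ'.2.1), if_pos rfl, if_pos rfl, if_pos hαβ']
      · rw [if_neg hαβ', map_zero, Finsupp.zero_apply, if_pos rfl, if_neg hαβ']
    · rw [if_neg hβ']
      split_ifs with hαβ'
      · rw [ih β' hαβ' (hMK hαβ'.2.1), if_neg hβ'.symm]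
      · rw [map_zero, Finsupp.zero_apply]
  rw [hφ α hα, map_add, map_sum, Finsupp.add_apply, finsetSum_apply,
    Finset.sum_congr rfl fun β' _ => hterm β', Finset.sum_ite_eq' Finset.univ,
    if_pos (Finset.mem_univ _), bdry_single_apply (partner_nonempty hK hMK hβ)]
  -- the face `μ β` of `α` and the edge `α → β` contribute the same term unless `β = α`
  have hedge : IsEdge m α β ↔ β ≠ α ∧ Covers α (m.μ β) :=
    ⟨fun h => ⟨h.1, h.2.2.2⟩, fun h => ⟨h.1, hβ.1, hβ.2, h.2⟩⟩
  by_cases hβα : β = α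
  · subst hβα; simp [hβ.2, hedge]
  · simp only [hedge, hβα, ne_eq, not_false_eq_true, true_and, if_false]
    split_ifs <;> decide

end Closure

section Match

variable {V : Type*} [DecidableEq V] {K : Set (Finset V)} {m : PartialMatching V}

theorem matchW_eq (k : ℕ) :
    matchW m k = supported (ZMod 2) (ZMod 2) (MupCard m k) ⊔
      (supported (ZMod 2) (ZMod 2) (MupCard m (k + 1))).map (bdry V) := by
  have hbdries :
      Submodule.span (ZMod 2) {f | ∃ β ∈ MupCard m (k + 1), f = bdry V (single β 1)} =
        (supported (ZMod 2) (ZMod 2) (MupCard m (k + 1))).map (bdry V) := by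
    rw [← span_single_eq_supported, Submodule.map_span]
    congr 1
    ext f
    simp [eq_comm]
  rw [matchW, Submodule.span_union, span_single_eq_supported, hbdries]

theorem supported_MupCard_le_matchW (k : ℕ) :
    supported (ZMod 2) (ZMod 2) (MupCard m k) ≤ matchW m k := by
  rw [matchW_eq]
  exact le_sup_left

theorem matchW_le_chainCard (hK : IsComplex K) (hMK : m.M ⊆ K) (k : ℕ) :
    matchW m k ≤ chainCard K k := by
  have hsupp : ∀ j, supported (ZMod 2) (ZMod 2) (MupCard m j) ≤ chainCard K j := fun j => by
    rw [chainCard_eq_supported]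
    exact supported_mono fun σ hσ => ⟨hMK hσ.1.1, hσ.2⟩
  rw [matchW_eq]
  exact sup_le (hsupp k) ((Submodule.map_mono (hsupp (k + 1))).trans (bdry_chainCard_le hK k))

theorem bdry_matchW_le (k : ℕ) : (matchW m (k + 1)).map (bdry V) ≤ matchW m k := by
  rintro _ ⟨x, hx, rfl⟩
  rw [matchW_eq] at hx ⊢
  obtain ⟨a, ha, _, ⟨b, -, rfl⟩, rfl⟩ := Submodule.mem_sup.1 hx
  rw [map_add, bdry_bdry, add_zero]
  exact Submodule.mem_sup_right ⟨a, ha, rfl⟩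

theorem eq_zero_of_bdry_apply_partner_eq_zero [Finite V] (hK : IsComplex K) (hMK : m.M ⊆ K)
    (hac : m.Acyclic) {c : Ch V} (hc : c ∈ supported (ZMod 2) (ZMod 2) (Mup m))
    (h : ∀ β ∈ Mup m, bdry V c (m.μ β) = 0) : c = 0 := by
  by_contra hne
  obtain ⟨β₀, hβ₀, hmin⟩ := hac.wellFounded_isEdge.has_min (c.support : Set (Finset V))
    (Finset.coe_nonempty.2 (support_nonempty_iff.2 hne))
  have hβ₀up : β₀ ∈ Mup m := hc hβ₀
  have hcoeff : bdry V c (m.μ β₀) = c β₀ := by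
    rw [bdry_apply c (partner_nonempty hK hMK hβ₀up), Finset.sum_eq_single β₀
      (fun β hβ hββ₀ => if_neg fun hcov => hmin β hβ ⟨Ne.symm hββ₀, hβ₀up.1, hβ₀up.2, hcov⟩)
      (fun h => absurd hβ₀ h), if_pos hβ₀up.2]
  exact mem_support_iff.1 hβ₀ (hcoeff ▸ h β₀ hβ₀up)

theorem cyclesOf_matchW_le [Finite V] (hK : IsComplex K) (hMK : m.M ⊆ K) (hac : m.Acyclic)
    (k : ℕ) :
    cyclesOf (matchW m) k ≤ bdriesOf (matchW m) k := by
  rintro x ⟨hx, hbx⟩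
  rw [SetLike.mem_coe, matchW_eq] at hx
  obtain ⟨a, ha, _, ⟨b, hb, rfl⟩, rfl⟩ := Submodule.mem_sup.1 hx
  have hba : bdry V a = 0 := by simpa [bdry_bdry] using hbx
  have ha0 : a = 0 := eq_zero_of_bdry_apply_partner_eq_zero hK hMK hac
    (supported_mono (fun _ h => h.1) ha) fun β _ => by rw [hba, Finsupp.zero_apply]
  rw [ha0, zero_add]
  exact ⟨b, supported_MupCard_le_matchW (k + 1) hb, rfl⟩

end Match

section Crit

variable {V : Type*} [Fintype V] [DecidableEq V] {K : Set (Finset V)} {m : PartialMatching V}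
  {φ : Finset V → Ch V}

theorem critWOn_le_chainCard (hφ : IsClosure K m φ) (hac : m.Acyclic) (hMK : m.M ⊆ K)
    (k : ℕ) :
    critWOn K m φ k ≤ chainCard K k := by
  rw [critWOn, Submodule.span_le]
  rintro _ ⟨γ, hγ, rfl, -, rfl⟩
  exact hφ.mem_chainCard hac hMK hγ

theorem apply_partner_eq_zero_of_mem_critWOn (hφ : IsClosure K m φ) (hac : m.Acyclic)
    (hMK : m.M ⊆ K) {k : ℕ} {x : Ch V} (hx : x ∈ critWOn K m φ k) {β : Finset V}
    (hβ : β ∈ Mup m) : x (m.μ β) = 0 := by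
  induction hx using Submodule.span_induction with
  | mem _ h =>
    obtain ⟨γ, hγ, -, hγM, rfl⟩ := h
    exact hφ.apply_of_notMem_Mup hac hMK hγ (partner_notMem_Mup hβ)
      fun h : m.μ β = γ => hγM (h ▸ m.mem_M β hβ.1)
  | zero => rfl
  | add _ _ _ _ hx hy => rw [Finsupp.add_apply, hx, hy, add_zero]
  | smul a _ _ hx => rw [Finsupp.smul_apply, hx, smul_zero]

theorem bdry_apply_partner_eq_zero_of_mem_critWOn (hφ : IsClosure K m φ) (hK : IsComplex K)
    (hac : m.Acyclic) (hMK : m.M ⊆ K) {k : ℕ} {x : Ch V} (hx : x ∈ critWOn K m φ k)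
    {β : Finset V} (hβ : β ∈ Mup m) : bdry V x (m.μ β) = 0 := by
  induction hx using Submodule.span_induction with
  | mem _ h =>
    obtain ⟨γ, hγ, -, hγM, rfl⟩ := h
    rw [hφ.bdry_apply_partner hK hac hMK hγ hβ, if_neg fun h : β = γ => hγM (h ▸ hβ.1)]
  | zero => rw [map_zero, Finsupp.zero_apply]
  | add _ _ _ _ hx hy => rw [map_add, Finsupp.add_apply, hx, hy, add_zero]
  | smul a _ _ hx => rw [map_smul, Finsupp.smul_apply, hx, smul_zero]

theorem eq_zero_of_mem_critWOn (hφ : IsClosure K m φ) (hac : m.Acyclic) (hMK : m.M ⊆ K)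
    {k : ℕ} {x : Ch V} (hx : x ∈ critWOn K m φ k) (h : ∀ γ ∉ m.M, x γ = 0) : x = 0 := by
  have himage : {f | ∃ γ, γ ∈ K ∧ γ.card = k ∧ γ ∉ m.M ∧ f = φ γ} =
      φ '' {γ | γ ∈ K ∧ γ.card = k ∧ γ ∉ m.M} := by
    ext f
    exact ⟨fun ⟨γ, hγK, hγk, hγM, hf⟩ => ⟨γ, ⟨hγK, hγk, hγM⟩, hf.symm⟩,
      fun ⟨γ, ⟨hγK, hγk, hγM⟩, hf⟩ => ⟨γ, hγK, hγk, hγM, hf.symm⟩⟩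
  rw [critWOn, himage, mem_span_image_iff_linearCombination] at hx
  obtain ⟨l, hl, rfl⟩ := hx
  suffices l = 0 by rw [this, map_zero]
  ext γ
  by_contra hγ
  have hγs : γ ∈ l.support := mem_support_iff.2 hγ
  obtain ⟨hγK, -, hγM⟩ := hl hγs
  have hcoeff : linearCombination (ZMod 2) φ l γ = l γ := by
    rw [linearCombination_apply, Finsupp.sum, finsetSum_apply, Finset.sum_eq_single γ
      (fun γ' hγ' hne => by rw [Finsupp.smul_apply, hφ.apply_of_notMem_Mup hac hMK (hl hγ').1
        (fun h => hγM h.1) (Ne.symm hne), smul_zero]) (fun h => absurd hγs h),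
      Finsupp.smul_apply, hφ.apply_self hac hMK hγK, smul_eq_mul, mul_one]
  exact hγ (hcoeff ▸ h γ hγM)

theorem disjoint_critWOn_matchW (hφ : IsClosure K m φ) (hK : IsComplex K) (hac : m.Acyclic)
    (hMK : m.M ⊆ K) (k : ℕ) : Disjoint (critWOn K m φ k) (matchW m k) := by
  rw [Submodule.disjoint_def]
  intro x hxc hxm
  rw [matchW_eq] at hxm
  obtain ⟨a, ha, _, ⟨b, hb, rfl⟩, rfl⟩ := Submodule.mem_sup.1 hxm
  have ha' : a ∈ supported (ZMod 2) (ZMod 2) (Mup m) := supported_mono (fun _ h => h.1) ha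
  have hb0 : b = 0 := eq_zero_of_bdry_apply_partner_eq_zero hK hMK hac
    (supported_mono (fun _ h => h.1) hb) fun β hβ => by
      have h := apply_partner_eq_zero_of_mem_critWOn hφ hac hMK hxc hβ
      rwa [Finsupp.add_apply, (mem_supported' _ _).1 ha' _ (partner_notMem_Mup hβ),
        zero_add] at h
  rw [hb0, map_zero, add_zero] at hxc ⊢
  exact eq_zero_of_mem_critWOn hφ hac hMK hxc fun γ hγ =>
    (mem_supported' _ _).1 ha' γ fun h => hγ h.1

end Crit

section Decomposition

variable {V : Type*} [Fintype V] [DecidableEq V] {K : Set (Finset V)} {m : PartialMatching V}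
  {φ : Finset V → Ch V}

theorem single_mem_critWOn_sup_matchW (hφ : IsClosure K m φ) (hac : m.Acyclic)
    (hMK : m.M ⊆ K) {τ : Finset V} (hτ : τ ∈ K)
    (hdown : τ ∈ m.M → τ ∉ Mup m → single τ 1 ∈ critWOn K m φ τ.card ⊔ matchW m τ.card) :
    single τ 1 ∈ critWOn K m φ τ.card ⊔ matchW m τ.card := by
  by_cases hτM : τ ∈ m.M
  · by_cases hτup : τ ∈ Mup m
    · exact Submodule.mem_sup_right
        (supported_MupCard_le_matchW _ (single_mem_supported _ _ ⟨hτup, rfl⟩))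
    · exact hdown hτM hτup
  · rw [← sub_sub_cancel (φ τ) (single τ 1)]
    exact sub_mem (Submodule.mem_sup_left (Submodule.subset_span ⟨τ, hτ, rfl, hτM, rfl⟩))
      (Submodule.mem_sup_right (hφ.sub_single_mem_matchW hac hMK hτ))

/-- The partner `μ β` is `∂ β` minus the other faces of `β`; those lie in `Crit + Match`
directly or, when down-matched, by induction along the edge from `β` to their partner. -/
theorem single_partner_mem_critWOn_sup_matchW (hφ : IsClosure K m φ) (hK : IsComplex K)
    (hac : m.Acyclic) (hMK : m.M ⊆ K) {β : Finset V} (hβ : β ∈ Mup m) :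
    single (m.μ β) 1 ∈ critWOn K m φ (m.μ β).card ⊔ matchW m (m.μ β).card := by
  induction β using hac.wellFounded_swap_isEdge.induction with
  | _ β ih =>
  obtain ⟨v₀, hv₀, hβv₀⟩ := hβ.2.exists_erase
  have hpos := Finset.card_pos.2 (partner_nonempty hK hMK hβ)
  have hfaces : ∀ v ∈ β.erase v₀, single (β.erase v) 1 ∈
      critWOn K m φ (m.μ β).card ⊔ matchW m (m.μ β).card := by
    intro v hv
    have hvβ := Finset.mem_of_mem_erase hv
    have hcard : (β.erase v).card = (m.μ β).card := by
      rw [← hβv₀, Finset.card_erase_of_mem hvβ, Finset.card_erase_of_mem hv₀]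
    rw [← hcard]
    refine single_mem_critWOn_sup_matchW hφ hac hMK ((hK β (hMK hβ.1)).2 _
      (Finset.erase_subset v β) (Finset.card_pos.1 (by omega))) fun hτM hτup => ?_
    obtain ⟨hβ'up, hβ'inv⟩ := partner_mem_Mup_of_notMem_Mup hτM hτup
    have hne : m.μ (β.erase v) ≠ β := fun h => Finset.ne_of_mem_erase hv <|
      (Finset.erase_inj β hvβ).1 (by rw [← hβ'inv, h, hβv₀])
    simpa only [hβ'inv] using
      ih _ ⟨hne, hβ'up.1, hβ'up.2, by rw [hβ'inv]; exact covers_erase hvβ⟩ hβ'up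
  have hbdry : bdry V (single β 1) =
      single (m.μ β) 1 + ∑ v ∈ β.erase v₀, single (β.erase v) 1 := by
    rw [bdry_single, if_neg (by rw [hβ.2.2]; omega), ← Finset.add_sum_erase β _ hv₀, hβv₀]
  rw [← add_sub_cancel_right (single (m.μ β) 1) (∑ v ∈ β.erase v₀, single (β.erase v) 1),
    ← hbdry]
  refine sub_mem (Submodule.mem_sup_right (Submodule.subset_span (Or.inr ?_)))
    (Submodule.sum_mem _ hfaces)
  exact ⟨β, ⟨hβ, hβ.2.2⟩, rfl⟩

theorem critWOn_sup_matchW (hφ : IsClosure K m φ) (hK : IsComplex K) (hac : m.Acyclic)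
    (hMK : m.M ⊆ K) (k : ℕ) : critWOn K m φ k ⊔ matchW m k = chainCard K k := by
  refine le_antisymm
    (sup_le (critWOn_le_chainCard hφ hac hMK k) (matchW_le_chainCard hK hMK k)) ?_
  rw [chainCard, Submodule.span_le]
  rintro _ ⟨δ, hδ, rfl, rfl⟩
  refine single_mem_critWOn_sup_matchW hφ hac hMK hδ fun hδM hδup => ?_
  obtain ⟨hβ, hinv⟩ := partner_mem_Mup_of_notMem_Mup hδM hδup
  simpa only [hinv] using single_partner_mem_critWOn_sup_matchW hφ hK hac hMK hβ

/-- Write `∂ x = a + b + ∂ c` with `a ∈ Crit` and `b, c` supported on `M^↑`; reading off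
coefficients at down-matched simplices, first for `∂ x` and then for `∂ ∂ x = 0`, kills `c`
and `b` by triangularity. -/
theorem bdry_critWOn_le (hφ : IsClosure K m φ) (hK : IsComplex K) (hac : m.Acyclic)
    (hMK : m.M ⊆ K) (k : ℕ) : (critWOn K m φ (k + 1)).map (bdry V) ≤ critWOn K m φ k := by
  rintro _ ⟨x, hx, rfl⟩
  have hy : bdry V x ∈ critWOn K m φ k ⊔ matchW m k := by
    rw [critWOn_sup_matchW hφ hK hac hMK]
    exact bdry_chainCard_le hK k ⟨x, critWOn_le_chainCard hφ hac hMK _ hx, rfl⟩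
  obtain ⟨a, ha, z, hz, hxz⟩ := Submodule.mem_sup.1 hy
  rw [matchW_eq] at hz
  obtain ⟨b, hb, _, ⟨c, hc, rfl⟩, rfl⟩ := Submodule.mem_sup.1 hz
  have hb' : b ∈ supported (ZMod 2) (ZMod 2) (Mup m) := supported_mono (fun _ h => h.1) hb
  have hc0 : c = 0 := eq_zero_of_bdry_apply_partner_eq_zero hK hMK hac
    (supported_mono (fun _ h => h.1) hc) fun β hβ => by
      have h := congrArg (· (m.μ β)) hxz
      simpa only [Finsupp.add_apply, apply_partner_eq_zero_of_mem_critWOn hφ hac hMK ha hβ,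
        (mem_supported' _ _).1 hb' _ (partner_notMem_Mup hβ),
        bdry_apply_partner_eq_zero_of_mem_critWOn hφ hK hac hMK hx hβ, zero_add] using h
  rw [hc0, map_zero, add_zero] at hxz
  have hb0 : b = 0 := eq_zero_of_bdry_apply_partner_eq_zero hK hMK hac hb' fun β hβ => by
    have h := congrArg (fun y => bdry V y (m.μ β)) hxz
    simpa only [map_add, bdry_bdry, Finsupp.add_apply, Finsupp.zero_apply,
      bdry_apply_partner_eq_zero_of_mem_critWOn hφ hK hac hMK ha hβ, zero_add] using h
  rw [← hxz, hb0, add_zero]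
  exact ha

end Decomposition

theorem homolMap_bijective_of_acyclic_complement {V : Type*} [DecidableEq V]
    {A B C : ℕ → Submodule (ZMod 2) (Ch V)}
    (hA : ∀ k, (A (k + 1)).map (bdry V) ≤ A k) (hB : ∀ k, (B (k + 1)).map (bdry V) ≤ B k)
    (hsup : ∀ k, A k ⊔ B k = C k) (hdisj : ∀ k, Disjoint (A k) (B k))
    (hacyc : ∀ k, cyclesOf B k ≤ bdriesOf B k) (k : ℕ) :
    Function.Bijective (homolMap A C (fun j => le_sup_left.trans (hsup j).le) (k + 1)) := by
  constructor
  · rw [injective_iff_map_eq_zero]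
    intro x hx
    obtain ⟨z, rfl⟩ := Submodule.Quotient.mk_surjective _ x
    rw [homolMap, Submodule.mapQ_apply, Submodule.Quotient.mk_eq_zero] at hx
    obtain ⟨y, hy, hyz⟩ := hx
    rw [← hsup] at hy
    obtain ⟨u, hu, v, hv, rfl⟩ := Submodule.mem_sup.1 hy
    change bdry V (u + v) = z at hyz
    have hvz : bdry V v = z - bdry V u := by rw [← hyz, map_add, add_sub_cancel_left]
    have hv0 : bdry V v = 0 := Submodule.disjoint_def.1 (hdisj (k + 1)) _
      (hvz ▸ sub_mem z.2.1 (hA _ ⟨u, hu, rfl⟩)) (hB _ ⟨v, hv, rfl⟩)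
    rw [Submodule.Quotient.mk_eq_zero]
    exact ⟨u, hu, (sub_eq_zero.1 (hvz ▸ hv0)).symm⟩
  · intro x
    obtain ⟨z, rfl⟩ := Submodule.Quotient.mk_surjective _ x
    obtain ⟨hzC, hz⟩ := z.2
    rw [← hsup] at hzC
    obtain ⟨a, ha, b, hb, hab⟩ := Submodule.mem_sup.1 hzC
    have hba : bdry V b = -bdry V a := by
      rw [eq_neg_iff_add_eq_zero, add_comm, ← map_add, hab]; exact hz
    have hb0 : bdry V b = 0 := Submodule.disjoint_def.1 (hdisj k) _
      (hba ▸ neg_mem (hA k ⟨a, ha, rfl⟩)) (hB k ⟨b, hb, rfl⟩)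
    have ha0 : bdry V a = 0 := by rwa [hb0, zero_eq_neg] at hba
    obtain ⟨w, hw, hwb⟩ := hacyc (k + 1) ⟨hb, hb0⟩
    refine ⟨Submodule.Quotient.mk ⟨a, ha, ha0⟩, ?_⟩
    rw [homolMap, Submodule.mapQ_apply, Submodule.Quotient.eq]
    refine ⟨-w, le_sup_right.trans (hsup _).le (neg_mem hw), ?_⟩
    change bdry V (-w) = a - z
    rw [map_neg, hwb, ← hab, sub_add_cancel_left]

/-- For a finite simplicial complex `K` with an acyclic partial matching
`μ`, the homology of `K` is isomorphic to the homology of the critical (Morse) complex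
`Crit_*(K, μ)` in every degree `q ≥ 0`. -/
theorem homology_iso_crit {V : Type*} [Fintype V] [DecidableEq V]
    (K : Set (Finset V)) (hK : IsComplex K)
    (m : PartialMatching V) (hMK : m.M ⊆ K) (hac : m.Acyclic)
    (φ : Finset V → Ch V) (hφ : IsClosure K m φ) :
    ∀ q : ℕ,
      Nonempty (homolOf (chainCard K) (q + 1) ≃ₗ[ZMod 2]
        homolOf (critWOn K m φ) (q + 1)) := fun q =>
  ⟨(LinearEquiv.ofBijective _ (homolMap_bijective_of_acyclic_complement
    (bdry_critWOn_le hφ hK hac hMK) bdry_matchW_le (critWOn_sup_matchW hφ hK hac hMK)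
    (disjoint_critWOn_matchW hφ hK hac hMK) (cyclesOf_matchW_le hK hMK hac) q)).symm⟩
end

section
/- The apparent pairs of the simplex-wise refinement of the Vietoris–Rips filtration of a finite metric space X form an acyclic partial matching on VR_∞(X). -/
set_option maxSynthPendingDepth 2

/-- The diameter of a simplex (finite subset of a metric space). -/
noncomputable def sdiam {X : Type*} [MetricSpace X] (σ : Finset X) : ℝ :=
  Metric.diam (σ : Set X)

/-- The increasingly sorted list of labels of the vertices of a simplex. -/
def labelList {X : Type*} [DecidableEq X] (ψ : X → ℕ) (σ : Finset X) : List ℕ :=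
  (σ.image ψ).sort (· ≤ ·)

/-- The length-lexicographic order on simplices: compare first by diameter,
then by dimension (cardinality), then lexicographically on the sorted label lists. -/
def sLT {X : Type*} [MetricSpace X] [DecidableEq X] (ψ : X → ℕ) (σ τ : Finset X) : Prop :=
  sdiam σ < sdiam τ ∨
    (sdiam σ = sdiam τ ∧
      (σ.card < τ.card ∨
        (σ.card = τ.card ∧ List.Lex (· < ·) (labelList ψ σ) (labelList ψ τ))))

/-- `(τ, σ)` is an apparent pair: `τ` is the latest (in the filtration order) proper face
of `σ`, and `σ` is the earliest proper coface of `τ`. -/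
def ApparentPair {X : Type*} [MetricSpace X] [DecidableEq X] (ψ : X → ℕ)
    (τ σ : Finset X) : Prop :=
  τ.Nonempty ∧ τ ⊂ σ ∧
    (∀ τ' : Finset X, τ'.Nonempty → τ' ⊂ σ → τ' ≠ τ → sLT ψ τ' τ) ∧
    (∀ σ' : Finset X, τ ⊂ σ' → σ' ≠ σ → sLT ψ σ σ')

/-!
The simplex-wise order is a strict order refining inclusion: a face comes before each of
its cofaces, since diameter does not decrease and dimension increases. From this, an apparent
pair `(τ, σ)` must have `σ` covering `τ`, and no simplex is the coface of one apparent pair and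
the face of another. The apparent pairs therefore define a partial matching. Along a path
`σᵢ ≻ μ(σᵢ) ≺ σᵢ₊₁` the simplex `σᵢ₊₁` is a coface of `μ(σᵢ)` other than `σᵢ`, so `σᵢ` comes
strictly before `σᵢ₊₁`; a closed path would make the order cyclic.
-/

theorem Covers.ssubset {V : Type*} {σ τ : Finset V} (h : Covers σ τ) : τ ⊂ σ :=
  Finset.ssubset_iff_subset_ne.2 ⟨h.1, by rintro rfl; exact absurd h.2 (by omega)⟩

theorem Finset.insert_ssubset_of_card_add_one_lt {V : Type*} [DecidableEq V]
    {τ σ : Finset V} {x : V} (hx : x ∈ σ) (hτ : τ ⊆ σ) (hcard : τ.card + 1 < σ.card) :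
    insert x τ ⊂ σ :=
  Finset.ssubset_iff_subset_ne.2 ⟨Finset.insert_subset hx hτ, by
    rintro rfl; exact absurd (Finset.card_insert_le x τ) (by omega)⟩

theorem not_forall_lt_succ_mod {α : Type*} [Preorder α] {l : ℕ} (hl : 0 < l) (g : ℕ → α) :
    ¬ ∀ i < l, g i < g ((i + 1) % l) := by
  intro h
  have hle : ∀ k < l, g 0 ≤ g k := by
    intro k hk
    induction k with
    | zero => exact le_rfl
    | succ k ih =>
      have hstep := h k (by omega)
      rw [Nat.mod_eq_of_lt hk] at hstep
      exact (ih (by omega)).trans hstep.le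
  have hlast := h (l - 1) (by omega)
  rw [Nat.sub_add_cancel hl, Nat.mod_self] at hlast
  exact (hle (l - 1) (by omega)).not_gt hlast

theorem PartialMatching.acyclic_of_lt_cofaces {V α : Type*} [Preorder α]
    (m : PartialMatching V) (key : Finset V → α)
    (h : ∀ σ ∈ m.M, Covers σ (m.μ σ) → ∀ σ', Covers σ' (m.μ σ) → σ' ≠ σ → key σ < key σ') :
    m.Acyclic := by
  rintro ⟨l, f, hl, hinj, hmem, hcov⟩
  refine not_forall_lt_succ_mod (by omega : 0 < l) (key ∘ f) fun i hi => ?_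
  have hnext : (i + 1) % l < l := Nat.mod_lt _ (by omega)
  have hne : (i + 1) % l ≠ i := by
    rcases Nat.lt_or_ge (i + 1) l with h' | h'
    · rw [Nat.mod_eq_of_lt h']; omega
    · rw [show i + 1 = l by omega, Nat.mod_self]; omega
  exact h _ (hmem i hi).1 (hmem i hi).2 _ (hcov i hi) fun heq => hne (hinj _ hnext _ hi heq)

theorem sdiam_mono {X : Type*} [MetricSpace X] {σ τ : Finset X} (h : σ ⊆ τ) :
    sdiam σ ≤ sdiam τ :=
  Metric.diam_mono h τ.finite_toSet.isBounded

section FiltrationOrder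

variable {X : Type*} [MetricSpace X] [DecidableEq X] (ψ : X → ℕ)

noncomputable def filtrationKey (σ : Finset X) : ℝ ×ₗ ℕ ×ₗ List ℕ :=
  toLex (sdiam σ, toLex (σ.card, labelList ψ σ))

variable {ψ}

theorem sLT_iff_filtrationKey_lt {σ τ : Finset X} :
    sLT ψ σ τ ↔ filtrationKey ψ σ < filtrationKey ψ τ := by
  simp only [sLT, filtrationKey, Prod.Lex.toLex_lt_toLex]
  rfl

theorem sLT_asymm {σ τ : Finset X} (h : sLT ψ σ τ) : ¬ sLT ψ τ σ := by
  rw [sLT_iff_filtrationKey_lt] at h ⊢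
  exact h.not_gt

theorem sLT_of_ssubset {σ τ : Finset X} (h : σ ⊂ τ) : sLT ψ σ τ :=
  (sdiam_mono h.subset).lt_or_eq.imp id fun hd => ⟨hd, Or.inl (Finset.card_lt_card h)⟩

end FiltrationOrder

namespace ApparentPair

variable {X : Type*} [MetricSpace X] [DecidableEq X] {ψ : X → ℕ} {τ σ : Finset X}

theorem covers (h : ApparentPair ψ τ σ) : Covers σ τ := by
  obtain ⟨-, hsub, hlatest, -⟩ := h
  refine ⟨hsub.subset, ?_⟩
  by_contra hne
  have hcard : τ.card + 1 < σ.card := by have := Finset.card_lt_card hsub; omega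
  obtain ⟨x, hxσ, hxτ⟩ := Finset.exists_of_ssubset hsub
  have hτx : τ ⊂ insert x τ := Finset.ssubset_insert hxτ
  exact sLT_asymm (sLT_of_ssubset hτx) <| hlatest _ (Finset.insert_nonempty x τ)
    (Finset.insert_ssubset_of_card_add_one_lt hxσ hsub.subset hcard) hτx.ne'

theorem right_unique {σ' : Finset X} (h : ApparentPair ψ τ σ) (h' : ApparentPair ψ τ σ') :
    σ = σ' := by
  by_contra hne
  exact sLT_asymm (h.2.2.2 σ' h'.2.1 (Ne.symm hne)) (h'.2.2.2 σ h.2.1 hne)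

theorem left_unique {τ' : Finset X} (h : ApparentPair ψ τ σ) (h' : ApparentPair ψ τ' σ) :
    τ = τ' := by
  by_contra hne
  exact sLT_asymm (h.2.2.1 τ' h'.1 h'.2.1 (Ne.symm hne)) (h'.2.2.1 τ h.1 h.2.1 hne)

/-- Adding to `τ` a vertex `b ∈ σ \ ρ` gives a face of `σ` other than `ρ`, hence preceding `ρ`,
and a coface of `τ` other than `ρ`, hence following it. -/
theorem not_apparentPair_left {ρ : Finset X} (h : ApparentPair ψ τ ρ) :
    ¬ ApparentPair ψ ρ σ := by
  intro h'
  obtain ⟨b, hbσ, hbρ⟩ := Finset.exists_of_ssubset h'.2.1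
  have hbτ : b ∉ τ := fun hb => hbρ (h.2.1.subset hb)
  have hne : insert b τ ≠ ρ := fun heq => hbρ (heq ▸ Finset.mem_insert_self b τ)
  have hcard : τ.card + 1 < σ.card := by have := h.covers.2; have := h'.covers.2; omega
  have hface : insert b τ ⊂ σ :=
    Finset.insert_ssubset_of_card_add_one_lt hbσ (h.2.1.subset.trans h'.2.1.subset) hcard
  exact sLT_asymm (h'.2.2.1 _ (Finset.insert_nonempty b τ) hface hne)
    (h.2.2.2 _ (Finset.ssubset_insert hbτ) hne)

end ApparentPair

section ApparentMatching

variable {X : Type*} [MetricSpace X] [DecidableEq X] (ψ : X → ℕ)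

def apparentSimplices : Set (Finset X) :=
  {ρ | (∃ σ, ApparentPair ψ ρ σ) ∨ (∃ τ, ApparentPair ψ τ ρ)}

open Classical in
noncomputable def apparentPartner (ρ : Finset X) : Finset X :=
  if h : ∃ σ, ApparentPair ψ ρ σ then h.choose
  else if h' : ∃ τ, ApparentPair ψ τ ρ then h'.choose else ρ

variable {ψ}

theorem ApparentPair.apparentPartner_left {τ σ : Finset X} (h : ApparentPair ψ τ σ) :
    apparentPartner ψ τ = σ := by
  have hex : ∃ σ, ApparentPair ψ τ σ := ⟨σ, h⟩
  rw [apparentPartner, dif_pos hex]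
  exact hex.choose_spec.right_unique h

theorem ApparentPair.apparentPartner_right {τ σ : Finset X} (h : ApparentPair ψ τ σ) :
    apparentPartner ψ σ = τ := by
  have hex : ∃ τ, ApparentPair ψ τ σ := ⟨τ, h⟩
  rw [apparentPartner, dif_neg (fun ⟨_, h'⟩ => h.not_apparentPair_left h'), dif_pos hex]
  exact hex.choose_spec.left_unique h

theorem nonempty_of_mem_apparentSimplices {ρ : Finset X} (hρ : ρ ∈ apparentSimplices ψ) :
    ρ.Nonempty := by
  rcases hρ with ⟨σ, h⟩ | ⟨τ, h⟩
  · exact h.1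
  · exact h.1.mono h.2.1.subset

variable (ψ)

noncomputable def apparentMatching : PartialMatching X where
  M := apparentSimplices ψ
  μ := apparentPartner ψ
  mem_M := by
    rintro ρ (⟨σ, h⟩ | ⟨τ, h⟩)
    · rw [h.apparentPartner_left]; exact Or.inr ⟨ρ, h⟩
    · rw [h.apparentPartner_right]; exact Or.inl ⟨ρ, h⟩
  invol := by
    rintro ρ (⟨σ, h⟩ | ⟨τ, h⟩)
    · rw [h.apparentPartner_left, h.apparentPartner_right]
    · rw [h.apparentPartner_right, h.apparentPartner_left]
  matched := by
    rintro ρ (⟨σ, h⟩ | ⟨τ, h⟩)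
    · rw [h.apparentPartner_left]; exact Or.inl h.covers
    · rw [h.apparentPartner_right]; exact Or.inr h.covers

variable {ψ}

theorem apparentPair_apparentPartner_of_covers {ρ : Finset X} (hρ : ρ ∈ apparentSimplices ψ)
    (hcov : Covers ρ (apparentPartner ψ ρ)) : ApparentPair ψ (apparentPartner ψ ρ) ρ := by
  rcases hρ with ⟨σ, h⟩ | ⟨τ, h⟩
  · rw [h.apparentPartner_left] at hcov
    exact absurd h.covers.2 (by have := hcov.2; omega)
  · rwa [h.apparentPartner_right]

theorem apparentMatching_acyclic : (apparentMatching ψ).Acyclic :=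
  (apparentMatching ψ).acyclic_of_lt_cofaces (filtrationKey ψ) fun _ hρ hcov _ hcov' hne =>
    sLT_iff_filtrationKey_lt.1 <|
      (apparentPair_apparentPartner_of_covers hρ hcov).2.2.2 _ hcov'.ssubset hne

end ApparentMatching

theorem apparentPairs_acyclic_matching_general (X : Type*) [MetricSpace X]
    [DecidableEq X] (ψ : X → ℕ) :
    ∃ m : PartialMatching X,
      m.M ⊆ {σ : Finset X | σ.Nonempty} ∧
      m.M = {ρ | (∃ σ, ApparentPair ψ ρ σ) ∨ (∃ τ, ApparentPair ψ τ ρ)} ∧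
      (∀ τ σ, ApparentPair ψ τ σ → m.μ τ = σ ∧ m.μ σ = τ) ∧
      m.Acyclic := by
  exact ⟨apparentMatching ψ, fun _ => nonempty_of_mem_apparentSimplices, rfl,
    fun _ _ h => ⟨h.apparentPartner_left, h.apparentPartner_right⟩, apparentMatching_acyclic⟩

/-- The apparent pairs of the simplex-wise refinement of the
Vietoris–Rips filtration of a finite metric space `X` form an acyclic partial matching
on `VR_∞(X)` (the collection of all nonempty subsets of `X`). -/
theorem apparentPairs_acyclic_matching (X : Type*) [MetricSpace X] [Fintype X]
    [DecidableEq X] (ψ : X → ℕ) (hinj : Function.Injective ψ)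
    (hrange : ∀ x, ψ x ∈ Finset.Icc 1 (Fintype.card X)) :
    ∃ m : PartialMatching X,
      m.M ⊆ {σ : Finset X | σ.Nonempty} ∧
      m.M = {ρ | (∃ σ, ApparentPair ψ ρ σ) ∨ (∃ τ, ApparentPair ψ τ ρ)} ∧
      (∀ τ σ, ApparentPair ψ τ σ → m.μ τ = σ ∧ m.μ σ = τ) ∧
      m.Acyclic :=
  apparentPairs_acyclic_matching_general X ψ
end

section
/- Let X be a finite metric space, q ≥ 1, and r > 0. Suppose α ∈ DVR_r^q(X) is a q-simplex such that μ_q(α) is defined and μ_q(α) ∈ RVR_r^q(X). Then μ_q(α) ∈ DVR_r^q(X). -/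
set_option maxSynthPendingDepth 2

/-! Lunes, lune functions and (reduced) Vietoris–Rips complexes. -/

/-- The lune of a simplex `σ`: the points `x` such that replacing any vertex of `σ`
by `x` yields a simplex that comes strictly earlier in the filtration order. -/
def lune {X : Type*} [MetricSpace X] [DecidableEq X] (ψ : X → ℕ) (σ : Finset X) :
    Set X :=
  {x | ∀ y ∈ σ, sLT ψ (insert x (σ.erase y)) σ}

/-- Two points of the lune of `σ` are adjacent when every simplex obtained from `σ` by
replacing two distinct vertices by the two points comes earlier than `σ`. -/
def luneAdj {X : Type*} [MetricSpace X] [DecidableEq X] (ψ : X → ℕ) (σ : Finset X)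
    (p q : X) : Prop :=
  p ∈ lune ψ σ ∧ q ∈ lune ψ σ ∧ p ≠ q ∧
    ∀ y ∈ σ, ∀ z ∈ σ, y ≠ z → sLT ψ (insert p (insert q ((σ.erase y).erase z))) σ

/-- Two points are in the same connected component of the lune of `σ`. -/
def luneConn {X : Type*} [MetricSpace X] [DecidableEq X] (ψ : X → ℕ) (σ : Finset X) :
    X → X → Prop :=
  Relation.ReflTransGen (luneAdj ψ σ)

/-- `L` is a degree-`q` lune function: to every `q`-simplex it assigns a set consisting of
exactly one point of each connected component of its lune, namely the point of that
component whose vertex appears earliest in the filtration (smallest label). -/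
def IsLuneFun {X : Type*} [MetricSpace X] [DecidableEq X] (ψ : X → ℕ) (q : ℕ)
    (L : Finset X → Set X) : Prop :=
  ∀ σ : Finset X, σ.card = q + 1 →
    L σ ⊆ lune ψ σ ∧
    (∀ x ∈ lune ψ σ, ∃! y, y ∈ L σ ∧ luneConn ψ σ x y) ∧
    (∀ y ∈ L σ, ∀ z ∈ lune ψ σ, luneConn ψ σ y z → ψ y ≤ ψ z)

/-- The Vietoris–Rips complex of `X` at scale `r`. -/
noncomputable def VRc (X : Type*) [MetricSpace X] (r : ℝ) : Set (Finset X) :=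
  {σ | σ.Nonempty ∧ sdiam σ ≤ r}

theorem VRc_mono (X : Type*) [MetricSpace X] {r₁ r₂ : ℝ} (h : r₁ ≤ r₂) :
    VRc X r₁ ⊆ VRc X r₂ := by
  rintro σ ⟨h1, h2⟩
  exact ⟨h1, h2.trans h⟩

/-- The degree-`q` reduced Vietoris–Rips complex at scale `r`: all simplices of `VR_r(X)`
of dimension at most `q`, together with the `(q+1)`-simplices `⟨σ x⟩` for `q`-simplices
`σ ∈ VR_r(X)` and `x ∈ L σ`, of diameter at most `r`. -/
noncomputable def RVRc {X : Type*} [MetricSpace X] [DecidableEq X] (q : ℕ)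
    (L : Finset X → Set X) (r : ℝ) : Set (Finset X) :=
  {σ | σ.Nonempty ∧ σ.card ≤ q + 1 ∧ sdiam σ ≤ r} ∪
    {τ | ∃ σ : Finset X, ∃ x ∈ L σ, σ.card = q + 1 ∧ sdiam σ ≤ r ∧
      τ = insert x σ ∧ τ.card = q + 2 ∧ sdiam τ ≤ r}

theorem RVRc_mono {X : Type*} [MetricSpace X] [DecidableEq X] (q : ℕ)
    (L : Finset X → Set X) {r₁ r₂ : ℝ} (h : r₁ ≤ r₂) :
    RVRc q L r₁ ⊆ RVRc q L r₂ := by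
  rintro τ (⟨h1, h2, h3⟩ | ⟨σ, x, hx, h1, h2, h3, h4, h5⟩)
  · exact Or.inl ⟨h1, h2, h3.trans h⟩
  · exact Or.inr ⟨σ, x, hx, h1, h2.trans h, h3, h4, h5.trans h⟩

/-! The distilled Vietoris–Rips complex. -/

/-- The degree-`q` reduced Vietoris–Rips complex at scale `∞`: all simplices of
dimension at most `q`, together with the `(q+1)`-simplices `⟨σ x⟩` for `q`-simplices `σ`
and `x ∈ L σ`. -/
def RVRinf {X : Type*} (q : ℕ) (L : Finset X → Set X) [DecidableEq X] :
    Set (Finset X) :=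
  {σ | σ.Nonempty ∧ σ.card ≤ q + 1} ∪
    {τ | ∃ σ : Finset X, ∃ x ∈ L σ, σ.card = q + 1 ∧ τ = insert x σ ∧ τ.card = q + 2}

/-- `γ` is matched by the matching `μ_q` (defined via the selection function `xsel`,
which picks the earliest point of each lune-component set `L σ`): either `γ` is a
`q`-simplex with nonempty `L γ`, or `γ = ⟨x_ρ ρ⟩` for such a `q`-simplex `ρ`. -/
def MatchedSx {X : Type*} [DecidableEq X] (q : ℕ) (L : Finset X → Set X)
    (xsel : Finset X → X) (γ : Finset X) : Prop :=
  (γ.card = q + 1 ∧ (L γ).Nonempty) ∨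
    (∃ ρ : Finset X, ρ.card = q + 1 ∧ (L ρ).Nonempty ∧ γ = insert (xsel ρ) ρ ∧
      γ.card = q + 2)

/-- `(α, β)` is an edge of the graph `G_{q+1}(μ_q)` on the `(q+1)`-simplices of the
reduced Vietoris–Rips complex: `μ_q β` is defined (i.e. `β = ⟨x_ρ ρ⟩` is matched with
the `q`-simplex `ρ`) and `α ≠ β` covers `μ_q β = ρ`. -/
def dEdge {X : Type*} [DecidableEq X] (q : ℕ) (L : Finset X → Set X)
    (xsel : Finset X → X) (α β : Finset X) : Prop :=
  α ∈ RVRinf q L ∧ β ∈ RVRinf q L ∧ α.card = q + 2 ∧ β.card = q + 2 ∧ β ≠ α ∧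
    ∃ ρ : Finset X, ρ.card = q + 1 ∧ (L ρ).Nonempty ∧ β = insert (xsel ρ) ρ ∧
      ρ ⊆ α ∧ α.card = ρ.card + 1

/-- The set of `(q+1)`-simplices reachable from `α` in the graph `G_{q+1}(μ_q)`. -/
def reachD {X : Type*} [DecidableEq X] (q : ℕ) (L : Finset X → Set X)
    (xsel : Finset X → X) (α : Finset X) : Set (Finset X) :=
  {β | Relation.ReflTransGen (dEdge q L xsel) α β}

/-- The set `A`: the union of `reach σ` over all critical (unmatched) `(q+1)`-simplices
`σ` of the reduced Vietoris–Rips complex. -/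
def DVRA {X : Type*} [DecidableEq X] (q : ℕ) (L : Finset X → Set X)
    (xsel : Finset X → X) : Set (Finset X) :=
  ⋃ σ ∈ {σ | σ ∈ RVRinf q L ∧ σ.card = q + 2 ∧ ¬ MatchedSx q L xsel σ},
    reachD q L xsel σ

/-- The degree-`q` distilled Vietoris–Rips complex at scale `r`:
`{ν ∈ A : diam ν ≤ r} ∪ {η ⊆ ν : ν ∈ A, diam ν ≤ r}`. -/
noncomputable def DVRc {X : Type*} [MetricSpace X] [DecidableEq X] (q : ℕ)
    (L : Finset X → Set X) (xsel : Finset X → X) (r : ℝ) : Set (Finset X) :=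
  {ν | ν ∈ DVRA q L xsel ∧ sdiam ν ≤ r} ∪
    {η | η.Nonempty ∧ ∃ ν ∈ DVRA q L xsel, sdiam ν ≤ r ∧ η ⊆ ν}

theorem DVRc_mono {X : Type*} [MetricSpace X] [DecidableEq X] (q : ℕ)
    (L : Finset X → Set X) (xsel : Finset X → X) {r₁ r₂ : ℝ} (h : r₁ ≤ r₂) :
    DVRc q L xsel r₁ ⊆ DVRc q L xsel r₂ := by
  rintro ν (⟨h1, h2⟩ | ⟨h1, ν', h2, h3, h4⟩)
  · exact Or.inl ⟨h1, h2.trans h⟩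
  · exact Or.inr ⟨h1, ν', h2, h3.trans h, h4⟩

/-- The selection function `xsel` picks, for each `q`-simplex `σ` with `L σ ≠ ∅`, the
point of `L σ` whose vertex appears earliest in the filtration. -/
def IsEarliestSel {X : Type*} [MetricSpace X] [DecidableEq X] (ψ : X → ℕ) (q : ℕ)
    (L : Finset X → Set X) (xsel : Finset X → X) : Prop :=
  ∀ σ : Finset X, σ.card = q + 1 → (L σ).Nonempty →
    xsel σ ∈ L σ ∧ ∀ y ∈ L σ, y ≠ xsel σ → sLT ψ {xsel σ} {y}

theorem sLT_irrefl {X : Type*} [MetricSpace X] [DecidableEq X] (ψ : X → ℕ)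
    (σ : Finset X) : ¬ sLT ψ σ σ := by
  rintro (h | ⟨-, h | ⟨-, h⟩⟩)
  · exact lt_irrefl _ h
  · exact lt_irrefl _ h
  · exact irrefl_of (List.Lex (· < ·)) _ h

theorem notMem_of_mem_lune {X : Type*} [MetricSpace X] [DecidableEq X] (ψ : X → ℕ)
    {σ : Finset X} {x : X} (hx : x ∈ lune ψ σ) : x ∉ σ := by
  intro hxσ
  have h := hx x hxσ
  rw [Finset.insert_erase hxσ] at h
  exact sLT_irrefl ψ σ h

theorem mem_DVRA_props {X : Type*} [DecidableEq X] {q : ℕ} {L : Finset X → Set X}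
    {xsel : Finset X → X} {ν : Finset X} (h : ν ∈ DVRA q L xsel) :
    ν ∈ RVRinf q L ∧ ν.card = q + 2 := by
  simp only [DVRA, Set.mem_iUnion] at h
  obtain ⟨σ, ⟨hσ1, hσ2, -⟩, hreach⟩ := h
  induction hreach with
  | refl => exact ⟨hσ1, hσ2⟩
  | tail _ he _ => exact ⟨he.2.1, he.2.2.2.1⟩

/-- Let `r > 0` and let `α ∈ DVR_r^q(X)` be a `q`-simplex such that
`μ_q α` is defined and `μ_q α ∈ RVR_r^q(X)`. Then `μ_q α ∈ DVR_r^q(X)`. -/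
theorem matched_mem_distilled (X : Type*) [MetricSpace X] [Fintype X] [DecidableEq X]
    (ψ : X → ℕ) (hinj : Function.Injective ψ)
    (hrange : ∀ x, ψ x ∈ Finset.Icc 1 (Fintype.card X))
    (q : ℕ) (hq : 1 ≤ q) (L : Finset X → Set X) (hL : IsLuneFun ψ q L)
    (xsel : Finset X → X) (hxsel : IsEarliestSel ψ q L xsel)
    (r : ℝ) (hr : 0 < r)
    (α : Finset X) (hcard : α.card = q + 1)
    (hα : α ∈ DVRc q L xsel r)
    (hdef : (L α).Nonempty)
    (hμ : insert (xsel α) α ∈ RVRc q L r) :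
    insert (xsel α) α ∈ DVRc q L xsel r := by
  have hx : xsel α ∈ L α := (hxsel α hcard hdef).1
  have hxa : xsel α ∉ α := notMem_of_mem_lune ψ ((hL α hcard).1 hx)
  have cardβ : (insert (xsel α) α).card = q + 2 := by
    rw [Finset.card_insert_of_notMem hxa, hcard]
  have sdβ : sdiam (insert (xsel α) α) ≤ r := by
    rcases hμ with ⟨-, h2, -⟩ | ⟨σ, x, -, -, -, -, -, h5⟩
    · omega
    · exact h5
  have βRVR : insert (xsel α) α ∈ RVRinf q L :=
    Or.inr ⟨α, xsel α, hx, hcard, rfl, cardβ⟩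
  -- extract ν from hα
  rcases hα with ⟨hA, -⟩ | ⟨-, ν, hνA, hνd, hαν⟩
  · have := (mem_DVRA_props hA).2
    omega
  have ⟨νRVR, νcard⟩ := mem_DVRA_props hνA
  by_cases hβν : insert (xsel α) α = ν
  · exact Or.inl ⟨hβν ▸ hνA, sdβ⟩
  · have hedge : dEdge q L xsel ν (insert (xsel α) α) :=
      ⟨νRVR, βRVR, νcard, cardβ, hβν, α, hcard, hdef, rfl, hαν, by omega⟩
    simp only [DVRA, Set.mem_iUnion] at hνA
    obtain ⟨σ, hσ, hreach⟩ := hνA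
    have hβA : insert (xsel α) α ∈ DVRA q L xsel := by
      simp only [DVRA, Set.mem_iUnion]
      exact ⟨σ, hσ, hreach.tail hedge⟩
    exact Or.inl ⟨hβA, sdβ⟩
end
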